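/- For τ > 1, the function F_τ(x,y) = (sqrt(y₁² + y₂²) + τ(x₂y₁ − x₁y₂)) / (2(1 − x₁² − x₂²)) is strictly positive for all y ≠ 0 whenever x₁² + x₂² < 1/τ², and there exist x with 1/τ² < x₁² + x₂² < 1 and y ≠ 0 with F_τ(x,y) ≤ 0. -/

import Mathlib

/-!
By Cauchy–Schwarz, `|x₂ y₁ - x₁ y₂| ≤ |x| |y|`, so the numerator of `F_τ` is at least
`|y| (1 - |τ| |x|)`, which is positive when `|x| < 1/τ`; the denominator is positive on the disk.
Equality in Cauchy–Schwarz is attained at `y = (-x₂, x₁)`, where the numerator is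
`|x| (1 - τ |x|)`, negative as soon as `|x| > 1/τ`.
-/

open Real

noncomputable def Ftau (τ x₁ x₂ y₁ y₂ : ℝ) : ℝ :=
  (√(y₁ ^ 2 + y₂ ^ 2) + τ * (x₂ * y₁ - x₁ * y₂)) / (2 * (1 - x₁ ^ 2 - x₂ ^ 2))

theorem abs_cross_le_sqrt_mul_sqrt (x₁ x₂ y₁ y₂ : ℝ) :
    |x₂ * y₁ - x₁ * y₂| ≤ √(x₁ ^ 2 + x₂ ^ 2) * √(y₁ ^ 2 + y₂ ^ 2) := by
  rw [← sqrt_mul (by positivity), ← sqrt_sq_eq_abs]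
  exact sqrt_le_sqrt (by nlinarith [sq_nonneg (x₁ * y₁ + x₂ * y₂)])

theorem Ftau_pos {τ x₁ x₂ y₁ y₂ : ℝ} (hdisk : x₁ ^ 2 + x₂ ^ 2 < 1)
    (hx : τ ^ 2 * (x₁ ^ 2 + x₂ ^ 2) < 1) (hy : (y₁, y₂) ≠ (0, 0)) :
    0 < Ftau τ x₁ x₂ y₁ y₂ := by
  have hy_pos : 0 < √(y₁ ^ 2 + y₂ ^ 2) := by
    refine sqrt_pos.mpr ?_
    by_contra! h
    exact hy (by simp only [Prod.mk.injEq]; constructor <;> nlinarith [sq_nonneg y₁, sq_nonneg y₂])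
  have hτx : |τ| * √(x₁ ^ 2 + x₂ ^ 2) < 1 := by
    rw [← sqrt_sq_eq_abs, ← sqrt_mul (sq_nonneg τ)]
    exact (sqrt_lt' one_pos).mpr (by rwa [one_pow])
  have hcross : |τ * (x₂ * y₁ - x₁ * y₂)| < √(y₁ ^ 2 + y₂ ^ 2) :=
    calc |τ * (x₂ * y₁ - x₁ * y₂)|
        ≤ |τ| * (√(x₁ ^ 2 + x₂ ^ 2) * √(y₁ ^ 2 + y₂ ^ 2)) := by
          rw [abs_mul]; gcongr; exact abs_cross_le_sqrt_mul_sqrt x₁ x₂ y₁ y₂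
      _ = (|τ| * √(x₁ ^ 2 + x₂ ^ 2)) * √(y₁ ^ 2 + y₂ ^ 2) := by ring
      _ < 1 * √(y₁ ^ 2 + y₂ ^ 2) := by gcongr
      _ = √(y₁ ^ 2 + y₂ ^ 2) := one_mul _
  unfold Ftau
  apply div_pos _ (by linarith)
  linarith [neg_abs_le (τ * (x₂ * y₁ - x₁ * y₂))]

theorem Ftau_rotate_nonpos {τ x₁ x₂ : ℝ} (hdisk : x₁ ^ 2 + x₂ ^ 2 < 1)
    (hx : 1 ≤ τ * √(x₁ ^ 2 + x₂ ^ 2)) :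
    Ftau τ x₁ x₂ (-x₂) x₁ ≤ 0 := by
  have hnum : √((-x₂) ^ 2 + x₁ ^ 2) + τ * (x₂ * -x₂ - x₁ * x₁)
      = √(x₁ ^ 2 + x₂ ^ 2) * (1 - τ * √(x₁ ^ 2 + x₂ ^ 2)) := by
    have hswap : √((-x₂) ^ 2 + x₁ ^ 2) = √(x₁ ^ 2 + x₂ ^ 2) := by ring_nf
    rw [hswap]
    linear_combination τ * mul_self_sqrt (add_nonneg (sq_nonneg x₁) (sq_nonneg x₂))
  unfold Ftau
  rw [hnum]
  apply div_nonpos_of_nonpos_of_nonneg _ (by linarith)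
  exact mul_nonpos_of_nonneg_of_nonpos (sqrt_nonneg _) (by linarith)

theorem F_tau_large_tau (τ : ℝ) (hτ : 1 < τ) :
    (∀ x₁ x₂ : ℝ, x₁ ^ 2 + x₂ ^ 2 < 1 / τ ^ 2 →
      ∀ y₁ y₂ : ℝ, (y₁, y₂) ≠ (0, 0) →
        0 < (Real.sqrt (y₁ ^ 2 + y₂ ^ 2) + τ * (x₂ * y₁ - x₁ * y₂)) /
            (2 * (1 - x₁ ^ 2 - x₂ ^ 2))) ∧
    (∃ x₁ x₂ y₁ y₂ : ℝ, 1 / τ ^ 2 < x₁ ^ 2 + x₂ ^ 2 ∧ x₁ ^ 2 + x₂ ^ 2 < 1 ∧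
      (y₁, y₂) ≠ (0, 0) ∧
      (Real.sqrt (y₁ ^ 2 + y₂ ^ 2) + τ * (x₂ * y₁ - x₁ * y₂)) /
          (2 * (1 - x₁ ^ 2 - x₂ ^ 2)) ≤ 0) := by
  have hτ_pos : 0 < τ := one_pos.trans hτ
  have hτ_inv : 1 / τ < 1 := (div_lt_one hτ_pos).mpr hτ
  constructor
  · intro x₁ x₂ hx y₁ y₂ hy
    have hτ_inv_sq : 1 / τ ^ 2 < 1 := (div_lt_one (by positivity)).mpr (one_lt_pow₀ hτ two_ne_zero)
    refine Ftau_pos (hx.trans hτ_inv_sq) ?_ hy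
    rwa [lt_div_iff₀ (by positivity), mul_comm] at hx
  · obtain ⟨r, hr_gt, hr_lt⟩ := exists_between hτ_inv
    have hr_pos : 0 < r := (one_div_pos.mpr hτ_pos).trans hr_gt
    have hτr : 1 ≤ τ * √(r ^ 2 + 0 ^ 2) := by
      rw [div_lt_iff₀ hτ_pos, mul_comm] at hr_gt
      simpa [hr_pos.le] using hr_gt.le
    have hdisk : r ^ 2 + 0 ^ 2 < 1 := by nlinarith
    refine ⟨r, 0, -0, r, ?_, hdisk, by simp [hr_pos.ne'], Ftau_rotate_nonpos hdisk hτr⟩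
    rw [← one_div_pow]
    nlinarith [one_div_pos.mpr hτ_pos]
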